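/- arXiv:1702.00522 — 2 statements merged into one kernel-verified Lean document; each statement's English description precedes it below -/
import Mathlib

section
/- Let P be a symmetric convex polygon with dual Q, and let β_i = 1/[P_i,P_{i+1}], α_i = 1/[Q_i,Q_{i+1}]. Then [∇Q_i, ΔQ_i] = β_{i-1}β_iβ_{i+1}·[∇P_i, ΔP_i]·[ΔP_i, ΔP_{i+1}] > 0, i.e., the dual polygon is locally convex. -/
/-- Determinant of the 2×2 matrix with columns `v` and `w`. -/
noncomputable def det2 (v w : ℝ × ℝ) : ℝ := v.1 * w.2 - v.2 * w.1

/-!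
Writing `Q i = β i • ΔP i`, the dual edge `∇Q i` is parallel to the vertex `P i`: pairing it
with `P i` gives `1 - 1 = 0`, and pairing it with `P (i - 1)` identifies the factor as
`-β (i - 1) β i [∇P i, ΔP i]`. Hence `[∇Q i, ΔQ i]` is a product of two such factors times
`[P i, P (i + 1)] = (β i)⁻¹`, and every factor of that product is positive.
-/

lemma det2_smul_smul (r s : ℝ) (v w : ℝ × ℝ) : det2 (r • v) (s • w) = r * s * det2 v w := by
  simp only [det2, Prod.smul_fst, Prod.smul_snd, smul_eq_mul]
  ring

lemma dual_edge_sub_eq_smul {A B C : ℝ × ℝ} (hAB : det2 A B ≠ 0) (hBC : det2 B C ≠ 0) :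
    (det2 B C)⁻¹ • (C - B) - (det2 A B)⁻¹ • (B - A)
      = (-(det2 A B)⁻¹ * (det2 B C)⁻¹ * det2 (B - A) (C - B)) • B := by
  ext <;> simp only [Prod.fst_sub, Prod.snd_sub, Prod.smul_fst, Prod.smul_snd, smul_eq_mul]
    <;> field_simp <;> simp only [det2, Prod.fst_sub, Prod.snd_sub] <;> ring

lemma det2_dual_edge_sub {A B C D : ℝ × ℝ} (hAB : det2 A B ≠ 0) (hBC : det2 B C ≠ 0)
    (hCD : det2 C D ≠ 0) :
    det2 ((det2 B C)⁻¹ • (C - B) - (det2 A B)⁻¹ • (B - A))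
        ((det2 C D)⁻¹ • (D - C) - (det2 B C)⁻¹ • (C - B))
      = (det2 A B)⁻¹ * (det2 B C)⁻¹ * (det2 C D)⁻¹ * det2 (B - A) (C - B)
          * det2 (C - B) (D - C) := by
  rw [dual_edge_sub_eq_smul hAB hBC, dual_edge_sub_eq_smul hBC hCD, det2_smul_smul]
  field_simp

theorem stmt_2_general (P Q : ℤ → ℝ × ℝ) (β : ℤ → ℝ)
    (hconv : ∀ i, 0 < det2 (P i) (P (i + 1)))
    (hloc : ∀ i, 0 < det2 (P i - P (i - 1)) (P (i + 1) - P i))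
    (hβ : ∀ i, β i = (det2 (P i) (P (i + 1)))⁻¹)
    (hQ : ∀ i, Q i = β i • (P (i + 1) - P i)) :
    ∀ i, det2 (Q i - Q (i - 1)) (Q (i + 1) - Q i)
        = β (i - 1) * β i * β (i + 1) * det2 (P i - P (i - 1)) (P (i + 1) - P i)
          * det2 (P (i + 1) - P i) (P (i + 2) - P (i + 1))
      ∧ 0 < det2 (Q i - Q (i - 1)) (Q (i + 1) - Q i) := by
  intro i
  have hshift : i + 1 + 1 = i + 2 := by ring
  have hβ_pos : ∀ j, 0 < β j := fun j => hβ j ▸ inv_pos.2 (hconv j)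
  have key : det2 (Q i - Q (i - 1)) (Q (i + 1) - Q i)
      = β (i - 1) * β i * β (i + 1) * det2 (P i - P (i - 1)) (P (i + 1) - P i)
        * det2 (P (i + 1) - P i) (P (i + 2) - P (i + 1)) := by
    have h := det2_dual_edge_sub (A := P (i - 1)) (D := P (i + 2))
      (by simpa only [sub_add_cancel] using (hconv (i - 1)).ne') (hconv i).ne'
      (by simpa only [hshift] using (hconv (i + 1)).ne')
    simp only [hQ, hβ, sub_add_cancel, hshift, h]
  have hloc_succ := hloc (i + 1)
  rw [add_sub_cancel_right, hshift] at hloc_succ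
  refine ⟨key, key ▸ ?_⟩
  exact mul_pos (mul_pos (mul_pos (mul_pos (hβ_pos _) (hβ_pos _)) (hβ_pos _)) (hloc i)) hloc_succ

theorem stmt_2 (n : ℕ) (hn : 0 < n) (P Q : ℤ → ℝ × ℝ) (β : ℤ → ℝ)
    (hper : ∀ i, P (i + 2 * n) = P i)
    (hconv : ∀ i, 0 < det2 (P i) (P (i + 1)))
    (hloc : ∀ i, 0 < det2 (P i - P (i - 1)) (P (i + 1) - P i))
    (hsym : ∀ i, P (i + n) = -P i)
    (hβ : ∀ i, β i = (det2 (P i) (P (i + 1)))⁻¹)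
    (hQ : ∀ i, Q i = β i • (P (i + 1) - P i)) :
    ∀ i, det2 (Q i - Q (i - 1)) (Q (i + 1) - Q i)
        = β (i - 1) * β i * β (i + 1) * det2 (P i - P (i - 1)) (P (i + 1) - P i)
          * det2 (P (i + 1) - P i) (P (i + 2) - P (i + 1))
      ∧ 0 < det2 (Q i - Q (i - 1)) (Q (i + 1) - Q i) :=
  stmt_2_general P Q β hconv hloc hβ hQ
end

section
/- Let P be a symmetric convex 2n-gon with dual Q, and let X ∈ ℝ² be any nonzero vector. Then u_i = [X, Q_i] defines an eigenvector of the double evolute transform T_P with eigenvalue 1: -β_i ∇_i(α Δu) = u_i for all i. -/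
/-!
Since `Q i = β i • (P (i + 1) - P i)` with `β i = 1 / [P i, P (i + 1)]`, both `[Q i, P i]` and
`[Q i, P (i + 1)]` equal `-1`. Hence `Q i` and `Q (i + 1)` lie on the same line `[·, P (i + 1)] = -1`,
and the planar identity `[a, b] c + [b, c] a + [c, a] b = 0` gives the dual relation
`Q (i + 1) - Q i = -[Q i, Q (i + 1)] P (i + 1) = -P (i + 1) / α i`; local convexity makes
`[Q i, Q (i + 1)] = β i β (i + 1) [ΔP i, ΔP (i + 1)]` positive, so `α i` is a genuine inverse.
Pairing with `X` yields `α i (u (i + 1) - u i) = -[X, P (i + 1)]`, whose backward difference is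
`-[X, ΔP i] = -u i / β i`.
-/

lemma det2_smul_left (c : ℝ) (v w : ℝ × ℝ) : det2 (c • v) w = c * det2 v w := by
  simp only [det2, Prod.smul_fst, Prod.smul_snd, smul_eq_mul]; ring

lemma det2_smul_right (c : ℝ) (v w : ℝ × ℝ) : det2 v (c • w) = c * det2 v w := by
  simp only [det2, Prod.smul_fst, Prod.smul_snd, smul_eq_mul]; ring

lemma det2_sub_left (v v' w : ℝ × ℝ) : det2 (v - v') w = det2 v w - det2 v' w := by
  simp only [det2, Prod.fst_sub, Prod.snd_sub]; ring

lemma det2_sub_right (v w w' : ℝ × ℝ) : det2 v (w - w') = det2 v w - det2 v w' := by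
  simp only [det2, Prod.fst_sub, Prod.snd_sub]; ring

lemma det2_self (v : ℝ × ℝ) : det2 v v = 0 := by
  simp only [det2]; ring

lemma det2_comm (v w : ℝ × ℝ) : det2 w v = -det2 v w := by
  simp only [det2]; ring

lemma det2_smul_add_det2_smul_add_det2_smul (a b c : ℝ × ℝ) :
    det2 a b • c + det2 b c • a + det2 c a • b = 0 := by
  ext <;> simp only [det2, Prod.fst_add, Prod.snd_add, Prod.smul_fst, Prod.smul_snd, smul_eq_mul,
    Prod.fst_zero, Prod.snd_zero] <;> ring

section Dual

variable {p p' q : ℝ × ℝ}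

lemma det2_dual_left (hp : det2 p p' ≠ 0) (hq : q = (det2 p p')⁻¹ • (p' - p)) :
    det2 q p = -1 := by
  rw [hq, det2_smul_left, det2_sub_left, det2_self, sub_zero, det2_comm p p']
  field_simp

lemma det2_dual_right (hp : det2 p p' ≠ 0) (hq : q = (det2 p p')⁻¹ • (p' - p)) :
    det2 q p' = -1 := by
  rw [hq, det2_smul_left, det2_sub_left, det2_self, zero_sub]
  field_simp

lemma sub_eq_neg_det2_smul_of_det2_eq_neg_one {q' : ℝ × ℝ} (hq : det2 q p = -1)
    (hq' : det2 q' p = -1) : q' - q = -det2 q q' • p := by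
  have h := det2_smul_add_det2_smul_add_det2_smul q q' p
  rw [hq', det2_comm q p, hq, neg_neg] at h
  rw [neg_smul, eq_neg_iff_add_eq_zero, ← h]
  module

end Dual

section DualPolygon

variable {P Q : ℤ → ℝ × ℝ} {β : ℤ → ℝ}

lemma dual_sub_eq (hP : ∀ i, det2 (P i) (P (i + 1)) ≠ 0)
    (hβ : ∀ i, β i = (det2 (P i) (P (i + 1)))⁻¹) (hQ : ∀ i, Q i = β i • (P (i + 1) - P i))
    (i : ℤ) : Q (i + 1) - Q i = -det2 (Q i) (Q (i + 1)) • P (i + 1) := by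
  have hQ' : ∀ j, Q j = (det2 (P j) (P (j + 1)))⁻¹ • (P (j + 1) - P j) := fun j => hβ j ▸ hQ j
  exact sub_eq_neg_det2_smul_of_det2_eq_neg_one (det2_dual_right (hP i) (hQ' i))
    (det2_dual_left (hP (i + 1)) (hQ' (i + 1)))

lemma det2_dual_pos (hconv : ∀ i, 0 < det2 (P i) (P (i + 1)))
    (hloc : ∀ i, 0 < det2 (P i - P (i - 1)) (P (i + 1) - P i))
    (hβ : ∀ i, β i = (det2 (P i) (P (i + 1)))⁻¹) (hQ : ∀ i, Q i = β i • (P (i + 1) - P i))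
    (i : ℤ) : 0 < det2 (Q i) (Q (i + 1)) := by
  have hβpos : ∀ j, 0 < β j := fun j => hβ j ▸ inv_pos.mpr (hconv j)
  have h := hloc (i + 1)
  rw [add_sub_cancel_right] at h
  rw [hQ, hQ, det2_smul_left, det2_smul_right]
  exact mul_pos (hβpos i) (mul_pos (hβpos (i + 1)) h)

end DualPolygon

theorem stmt_13_general (P Q : ℤ → ℝ × ℝ) (α β u : ℤ → ℝ) (X : ℝ × ℝ)
    (hconv : ∀ i, 0 < det2 (P i) (P (i + 1)))
    (hloc : ∀ i, 0 < det2 (P i - P (i - 1)) (P (i + 1) - P i))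
    (hβ : ∀ i, β i = (det2 (P i) (P (i + 1)))⁻¹)
    (hQ : ∀ i, Q i = β i • (P (i + 1) - P i))
    (hα : ∀ i, α i = (det2 (Q i) (Q (i + 1)))⁻¹)
    (hu : ∀ i, u i = det2 X (Q i)) :
    ∀ i, -(β i) * (α i * (u (i + 1) - u i) - α (i - 1) * (u i - u (i - 1))) = u i := by
  have hflux : ∀ j, α j * (u (j + 1) - u j) = -det2 X (P (j + 1)) := by
    intro j
    rw [hu, hu, ← det2_sub_right, dual_sub_eq (fun j => (hconv j).ne') hβ hQ, det2_smul_right, hα,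
      ← mul_assoc, mul_neg, inv_mul_cancel₀ (det2_dual_pos hconv hloc hβ hQ j).ne']
    ring
  intro i
  have hprev := hflux (i - 1)
  rw [sub_add_cancel] at hprev
  rw [hflux, hprev, hu, hQ, det2_smul_right, det2_sub_right]
  ring

theorem stmt_13 (n : ℕ) (hn : 0 < n) (P Q : ℤ → ℝ × ℝ) (α β u : ℤ → ℝ) (X : ℝ × ℝ)
    (hper : ∀ i, P (i + 2 * n) = P i)
    (hconv : ∀ i, 0 < det2 (P i) (P (i + 1)))
    (hloc : ∀ i, 0 < det2 (P i - P (i - 1)) (P (i + 1) - P i))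
    (hsym : ∀ i, P (i + n) = -P i)
    (hβ : ∀ i, β i = (det2 (P i) (P (i + 1)))⁻¹)
    (hQ : ∀ i, Q i = β i • (P (i + 1) - P i))
    (hα : ∀ i, α i = (det2 (Q i) (Q (i + 1)))⁻¹)
    (hX : X ≠ 0)
    (hu : ∀ i, u i = det2 X (Q i)) :
    ∀ i, -(β i) * (α i * (u (i + 1) - u i) - α (i - 1) * (u i - u (i - 1))) = u i :=
  stmt_13_general P Q α β u X hconv hloc hβ hQ hα hu
end
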